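/- Let n ≥ 3 be an integer and let K ⊂ ℝ^{1+n} be compact. There exists a constant C > 0 such that for every continuous function f : ℝ^{1+n} → ℂ with support contained in K, ( ∫_{ℝ^n} ∫_{S^{n-1}} |Lf(y,θ)|² dθ dy )^{1/2} ≤ C ( ∫_{ℝ^{1+n}} |f|² )^{1/2}. -/

import Mathlib

/-!
Cauchy–Schwarz in the time variable gives `|Lf(y,θ)|² ≤ |T| ∫ |f(s, y + sθ)|² ds`, where the
compact set `T ⊂ ℝ` is the projection of `K` to the time axis. For each fixed `θ` the shear
`(s, y) ↦ (s, y + sθ)` preserves Lebesgue measure, so integrating this bound over `y` gives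
`|T| ‖f‖²`, and integrating over the sphere gives `‖Lf‖² ≤ |T| σ(S^{n-1}) ‖f‖²`.
-/

open MeasureTheory Metric
open scoped Real

/-- The light ray transform on Minkowski space `ℝ^{1+n}`. -/
noncomputable def lightRay {n : ℕ} (f : ℝ × EuclideanSpace ℝ (Fin n) → ℂ)
    (y : EuclideanSpace ℝ (Fin n)) (θ : sphere (0 : EuclideanSpace ℝ (Fin n)) 1) : ℂ :=
  ∫ s : ℝ, f (s, y + s • (θ : EuclideanSpace ℝ (Fin n)))

/-- The standard surface measure on the unit sphere of `ℝ^n`. -/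
noncomputable def sphereMeasure (n : ℕ) :
    Measure (sphere (0 : EuclideanSpace ℝ (Fin n)) 1) :=
  (volume : Measure (EuclideanSpace ℝ (Fin n))).toSphere

open Set
open scoped ENNReal

theorem enorm_integral_sq_le_measure_mul_lintegral {α F : Type*} [MeasurableSpace α]
    [NormedAddCommGroup F] [NormedSpace ℝ F] {μ : Measure α} {g : α → F} {T : Set α}
    (hg : AEStronglyMeasurable g μ) (hgT : ∀ x ∉ T, g x = 0) :
    ‖∫ x, g x ∂μ‖ₑ ^ 2 ≤ μ T * ∫⁻ x, ‖g x‖ₑ ^ 2 ∂μ := by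
  have hsupp : ∀ {h : α → ℝ≥0∞}, (∀ x, g x = 0 → h x = 0) → Function.support h ⊆ T :=
    fun hg0 x hx => by_contra fun hxT => hx (hg0 x (hgT x hxT))
  have hL1 : ∫⁻ x, ‖g x‖ₑ ∂μ = eLpNorm g 1 (μ.restrict T) := by
    rw [eLpNorm_one_eq_lintegral_enorm,
      setLIntegral_eq_of_support_subset (hsupp fun x hx => by simp [hx])]
  have hL2 : eLpNorm g 2 (μ.restrict T) ^ 2 = ∫⁻ x, ‖g x‖ₑ ^ 2 ∂μ := by
    have := eLpNorm_nnreal_pow_eq_lintegral (f := g) (μ := μ.restrict T) (p := 2) two_ne_zero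
    norm_num at this
    rw [this, setLIntegral_eq_of_support_subset (hsupp fun x hx => by simp [hx])]
  have hHolder : eLpNorm g 1 (μ.restrict T) ≤ eLpNorm g 2 (μ.restrict T) * μ T ^ (2⁻¹ : ℝ) := by
    have := eLpNorm_le_eLpNorm_mul_rpow_measure_univ (p := 1) (q := 2) one_le_two
      (hg.restrict (s := T))
    norm_num at this
    simpa using this
  calc ‖∫ x, g x ∂μ‖ₑ ^ 2 ≤ eLpNorm g 1 (μ.restrict T) ^ 2 := by
        rw [← hL1]; gcongr; exact enorm_integral_le_lintegral_enorm _
    _ ≤ (eLpNorm g 2 (μ.restrict T) * μ T ^ (2⁻¹ : ℝ)) ^ 2 := by gcongr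
    _ = μ T * ∫⁻ x, ‖g x‖ₑ ^ 2 ∂μ := by
        rw [mul_pow, hL2, ← ENNReal.rpow_two (_ ^ _), ENNReal.rpow_inv_rpow two_ne_zero, mul_comm]

theorem lintegral_lintegral_add_eq_lintegral_prod {α E : Type*} [MeasurableSpace α]
    [MeasurableSpace E] [AddGroup E] [MeasurableAdd₂ E] {ν : Measure α} {μ : Measure E}
    [SFinite ν] [SFinite μ] [μ.IsAddRightInvariant] {G : α × E → ℝ≥0∞} (hG : Measurable G)
    {w : α → E} (hw : Measurable w) :
    ∫⁻ y, (∫⁻ s, G (s, y + w s) ∂ν) ∂μ = ∫⁻ p, G p ∂(ν.prod μ) := by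
  have hshift : Measurable fun q : E × α => G (q.2, q.1 + w q.2) := by fun_prop
  rw [lintegral_lintegral_swap hshift.aemeasurable, lintegral_prod _ hG.aemeasurable]
  exact lintegral_congr fun s => lintegral_add_right_eq_self (fun y => G (s, y)) (w s)

section RayIntegrals

variable {E Θ F : Type*} [NormedAddCommGroup E] [NormedSpace ℝ E] [MeasurableSpace E]
  [BorelSpace E] [SecondCountableTopology E] [MeasurableSpace Θ]
  [NormedAddCommGroup F] [NormedSpace ℝ F]
  {μ : Measure E} [SFinite μ] [μ.IsAddRightInvariant] {u : Θ → E}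
  {f : ℝ × E → F} {T : Set ℝ}

theorem lintegral_lintegral_enorm_integral_sq_le {ν : Measure Θ} [SFinite ν] (hu : Measurable u)
    (hf : StronglyMeasurable f) (hfT : ∀ s ∉ T, ∀ y, f (s, y) = 0) :
    ∫⁻ y, (∫⁻ θ, ‖∫ s, f (s, y + s • u θ)‖ₑ ^ 2 ∂ν) ∂μ
      ≤ volume T * ν univ * ∫⁻ p, ‖f p‖ₑ ^ 2 ∂(volume.prod μ) := by
  set G : ℝ × E → ℝ≥0∞ := fun p => ‖f p‖ₑ ^ 2
  have hG : Measurable G := by fun_prop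
  have hray (y : E) (θ : Θ) :
      ‖∫ s, f (s, y + s • u θ)‖ₑ ^ 2 ≤ volume T * ∫⁻ s, G (s, y + s • u θ) :=
    enorm_integral_sq_le_measure_mul_lintegral
      (hf.comp_measurable (by fun_prop)).aestronglyMeasurable fun s hs => hfT s hs _
  have hH : Measurable fun q : E × Θ => ∫⁻ s, G (s, q.1 + s • u q.2) :=
    Measurable.lintegral_prod_right (by fun_prop)
  have hHθ (θ : Θ) : Measurable fun y => ∫⁻ s, G (s, y + s • u θ) :=
    (hH.comp (measurable_prodMk_right (y := θ)) :)
  calc ∫⁻ y, (∫⁻ θ, ‖∫ s, f (s, y + s • u θ)‖ₑ ^ 2 ∂ν) ∂μ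
      ≤ ∫⁻ y, (∫⁻ θ, volume T * (∫⁻ s, G (s, y + s • u θ)) ∂ν) ∂μ := by
        gcongr with y θ; exact hray y θ
    _ = ∫⁻ θ, (∫⁻ y, volume T * (∫⁻ s, G (s, y + s • u θ)) ∂μ) ∂ν :=
        lintegral_lintegral_swap (hH.const_mul _).aemeasurable
    _ = volume T * ∫⁻ θ, (∫⁻ y, (∫⁻ s, G (s, y + s • u θ)) ∂μ) ∂ν := by
        rw [← lintegral_const_mul _ hH.lintegral_prod_left']
        exact lintegral_congr fun θ => lintegral_const_mul _ (hHθ θ)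
    _ = volume T * ∫⁻ _θ, (∫⁻ p, G p ∂(volume.prod μ)) ∂ν := by
        congr 1
        exact lintegral_congr fun θ =>
          lintegral_lintegral_add_eq_lintegral_prod hG (measurable_id.smul_const _)
    _ = volume T * ν univ * ∫⁻ p, G p ∂(volume.prod μ) := by
        rw [lintegral_const]; ring

theorem integral_integral_norm_integral_sq_le {ν : Measure Θ} [IsFiniteMeasure ν]
    (hu : Measurable u) (hf : StronglyMeasurable f)
    (hf2 : Integrable (fun p => ‖f p‖ ^ 2) (volume.prod μ)) (hT : volume T ≠ ∞)
    (hfT : ∀ s ∉ T, ∀ y, f (s, y) = 0) :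
    ∫ y, (∫ θ, ‖∫ s, f (s, y + s • u θ)‖ ^ 2 ∂ν) ∂μ
      ≤ (volume T).toReal * (ν univ).toReal * ∫ p, ‖f p‖ ^ 2 ∂(volume.prod μ) := by
  have hB : ENNReal.ofReal (∫ p, ‖f p‖ ^ 2 ∂(volume.prod μ))
      = ∫⁻ p, ‖f p‖ₑ ^ 2 ∂(volume.prod μ) := by
    rw [ofReal_integral_eq_lintegral_ofReal hf2 (ae_of_all _ fun p => by positivity)]
    simp_rw [ENNReal.ofReal_pow (norm_nonneg _), ofReal_norm]
  have hLHS : ENNReal.ofReal (∫ y, (∫ θ, ‖∫ s, f (s, y + s • u θ)‖ ^ 2 ∂ν) ∂μ)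
      ≤ ∫⁻ y, (∫⁻ θ, ‖∫ s, f (s, y + s • u θ)‖ₑ ^ 2 ∂ν) ∂μ := by
    refine (Real.ofReal_le_enorm _).trans ((enorm_integral_le_lintegral_enorm _).trans ?_)
    refine lintegral_mono fun y => (enorm_integral_le_lintegral_enorm _).trans_eq ?_
    simp only [enorm_pow, enorm_norm]
  have hfin : volume T * ν univ * ∫⁻ p, ‖f p‖ₑ ^ 2 ∂(volume.prod μ) ≠ ∞ := by
    rw [← hB]; finiteness
  have := (ENNReal.ofReal_le_iff_le_toReal hfin).mp
    (hLHS.trans (lintegral_lintegral_enorm_integral_sq_le hu hf hfT))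
  rwa [← hB, ENNReal.toReal_mul, ENNReal.toReal_mul,
    ENNReal.toReal_ofReal (integral_nonneg fun p => by positivity)] at this

end RayIntegrals

theorem lightRay_L2_bound_general {n : ℕ}
    (K : Set (ℝ × EuclideanSpace ℝ (Fin n))) (hK : IsCompact K) :
    ∃ C : ℝ, 0 < C ∧ ∀ f : ℝ × EuclideanSpace ℝ (Fin n) → ℂ,
      Continuous f → Function.support f ⊆ K →
        Real.sqrt (∫ y : EuclideanSpace ℝ (Fin n),
            ∫ θ : sphere (0 : EuclideanSpace ℝ (Fin n)) 1,
              ‖lightRay f y θ‖ ^ 2 ∂(sphereMeasure n))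
          ≤ C * Real.sqrt (∫ p : ℝ × EuclideanSpace ℝ (Fin n), ‖f p‖ ^ 2) := by
  set T := Prod.fst '' K
  set c := (volume T).toReal * (sphereMeasure n univ).toReal
  refine ⟨√(c + 1), by positivity, fun f hf hfK => ?_⟩
  have hfT : ∀ s ∉ T, ∀ y, f (s, y) = 0 :=
    fun s hs y => by_contra fun h => hs ⟨(s, y), hfK h, rfl⟩
  have hf2 : Integrable (fun p => ‖f p‖ ^ 2) :=
    (hf.memLp_of_hasCompactSupport (p := (2 : ℕ))
      (HasCompactSupport.of_support_subset_isCompact hK hfK)).integrable_norm_pow two_ne_zero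
  have : IsFiniteMeasure (sphereMeasure n) := by rw [sphereMeasure]; infer_instance
  have hbound := integral_integral_norm_integral_sq_le measurable_subtype_coe
    hf.stronglyMeasurable hf2 (hK.image continuous_fst).measure_lt_top.ne hfT
    (ν := sphereMeasure n) (μ := volume)
  set N := ∫ p : ℝ × EuclideanSpace ℝ (Fin n), ‖f p‖ ^ 2
  calc _ ≤ √(c * N) := Real.sqrt_le_sqrt hbound
    _ ≤ √((c + 1) * N) := by gcongr; linarith
    _ = √(c + 1) * √N := Real.sqrt_mul (by positivity) _

/-- `L²` boundedness of the light ray transform on continuous functions with support in a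
fixed compact set `K ⊂ ℝ^{1+n}`, `n ≥ 3`. -/
theorem lightRay_L2_bound {n : ℕ} (hn : 3 ≤ n)
    (K : Set (ℝ × EuclideanSpace ℝ (Fin n))) (hK : IsCompact K) :
    ∃ C : ℝ, 0 < C ∧ ∀ f : ℝ × EuclideanSpace ℝ (Fin n) → ℂ,
      Continuous f → Function.support f ⊆ K →
        Real.sqrt (∫ y : EuclideanSpace ℝ (Fin n),
            ∫ θ : sphere (0 : EuclideanSpace ℝ (Fin n)) 1,
              ‖lightRay f y θ‖ ^ 2 ∂(sphereMeasure n))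
          ≤ C * Real.sqrt (∫ p : ℝ × EuclideanSpace ℝ (Fin n), ‖f p‖ ^ 2) :=
  lightRay_L2_bound_general K hK
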